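/- Let f, v2222, v223, v225, v226, v233, v235, v236, v333, e3, e5, e6 be nonnegative integers satisfying: f ≥ 5; v2222 + v236 + v333 ≥ 1; 2·e3 = 3·v333 + 2·v233 + v223 + v235 + v236; 2·e5 = v225 + v235 with e5 ≥ 1; 2·e6 = v226 + v236; and (e3 ≥ 1 or e6 ≥ 1). Define H(t) = (v2222 + v236 + v333 − 1)·t¹⁷ + (v2222 + 2·v236 + 2·v333 + f − 5)·t¹⁶ + (3·v2222 + (1/2)·v223 + (1/2)·v225 + (1/2)·v226 + v233 + v235 + 4·v236 + (7/2)·v333 + f − 8)·t¹⁵ + (3·v2222 + (1/2)·v225 + (1/2)·v226 + v233 + (3/2)·v235 + (11/2)·v236 + 5·v333 + 3·f − 16)·t¹⁴ + (5·v2222 + v223 + (3/2)·v225 + (3/2)·v226 + 2·v233 + (7/2)·v235 + (15/2)·v236 + 7·v333 + 3·f − 20)·t¹³ + (5·v2222 + (1/2)·v223 + v225 + (3/2)·v226 + 2·v233 + (9/2)·v235 + 8·v236 + (15/2)·v333 + 5·f − 28)·t¹² + (6·v2222 + v223 + 2·v225 + 2·v226 + 3·v233 + 6·v235 + 9·v236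 + 9·v333 + 5·f − 31)·t¹¹ + (6·v2222 + v223 + (3/2)·v225 + 2·v226 + 3·v233 + (13/2)·v235 + 9·v236 + 9·v333 + 6·f − 35)·t¹⁰ + (6·v2222 + v223 + 2·v225 + 2·v226 + 3·v233 + 7·v235 + 9·v236 + 9·v333 + 6·f − 36)·t⁹ + (6·v2222 + v223 + 2·v225 + 2·v226 + 3·v233 + 7·v235 + 9·v236 + 9·v333 + 6·f − 36)·t⁸ + (5·v2222 + v223 + (3/2)·v225 + 2·v226 + 3·v233 + (13/2)·v235 + 8·v236 + 8·v333 + 6·f − 35)·t⁷ + (5·v2222 + v223 + 2·v225 + 2·v226 + 3·v233 + 6·v235 + 7·v236 + 7·v333 + 5·f − 31)·t⁶ + (3·v2222 + (1/2)·v223 + v225 + (3/2)·v226 + 2·v233 + (9/2)·v235 + 5·v236 + (11/2)·v333 + 5·f − 28)·t⁵ + (3·v2222 + v223 + (3/2)·v225 + (3/2)·v226 + 2·v233 + (7/2)·v235 + (7/2)·v236 + 4·v333 + 3·f − 20)·t⁴ + (v2222 + (1/2)·v225 + (1/2)·v226 + v233 + (3/2)·v235 + (3/2)·v236 + 2·v333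 + 3·f − 16)·t³ + (v2222 + (1/2)·v223 + (1/2)·v225 + (1/2)·v226 + v233 + v235 + v236 + (3/2)·v333 + f − 8)·t² + (f − 5)·t − 1. Then all coefficients of H are integers, the coefficients in degrees 1 through 17 are nonnegative, the coefficients of t¹⁵ and t¹⁶ are strictly positive, and there exists a real number r0 with 0 < r0 < 1 such that H(r0) = 0, every complex root z of H with z ≠ r0 satisfies |z| > r0, and 1/r0 is a Perron number. -/

import Mathlib

open Polynomial

/-- A *Perron number* is a real algebraic integer `τ > 1` such that every complex root of the
minimal polynomial of `τ` over `ℚ` other than `τ` itself has absolute value strictly less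
than `τ`. -/
def IsPerronNumber (τ : ℝ) : Prop :=
  1 < τ ∧ IsIntegral ℤ τ ∧
    ∀ z : ℂ, aeval z (minpoly ℚ τ) = 0 → z ≠ (τ : ℂ) → ‖z‖ < τ

/-!
Eliminating `v223`, `v225`, `v226` through the edge counts shows that `H` has integer
coefficients, nonnegative in positive degrees and with constant term `-1`. Such a polynomial `P`
is increasing on `[0, ∞)` with `P 0 < 0 < P 1`, so it has a unique root `r` in `(0, 1)`. For a
complex root `z`, `0 = Re P(z) ≤ P(‖z‖)` gives `r ≤ ‖z‖`; in case of equality every monomial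
`z ^ k` with a positive coefficient is the positive real `‖z‖ ^ k`, and two consecutive ones
(degrees 15 and 16) force `z = r`. Finally `r⁻¹` is a root of the reverse of `P`, which is monic
up to the unit `P 0`, and the conjugates of `r⁻¹` are inverses of the other roots of `P`.
-/

namespace Polynomial

section NonnegCoeff

variable {P : ℝ[X]}

lemma strictMonoOn_eval_of_coeff_nonneg (hP : ∀ k, 1 ≤ k → 0 ≤ P.coeff k) {n : ℕ}
    (hn : 1 ≤ n) (hPn : 0 < P.coeff n) : StrictMonoOn P.eval (Set.Ici 0) := by
  intro x hx y _ hxy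
  simp only [eval_eq_sum_range]
  refine Finset.sum_lt_sum (fun k _ => ?_) ⟨n, ?_, ?_⟩
  · rcases Nat.eq_zero_or_pos k with rfl | hk
    · simp
    · exact mul_le_mul_of_nonneg_left (pow_le_pow_left₀ hx hxy.le k) (hP k hk)
  · exact Finset.mem_range_succ_iff.mpr (le_natDegree_of_ne_zero hPn.ne')
  · exact mul_lt_mul_of_pos_left (pow_lt_pow_left₀ hxy hx (by omega)) hPn

lemma eval_norm_sub_re_aeval (z : ℂ) :
    P.eval ‖z‖ - (aeval z P).re =
      ∑ k ∈ Finset.range (P.natDegree + 1), P.coeff k * (‖z‖ ^ k - (z ^ k).re) := by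
  simp [eval_eq_sum_range, aeval_eq_sum_range, Complex.re_sum, mul_sub, Finset.sum_sub_distrib]

lemma coeff_mul_sub_re_pow_nonneg (hP : ∀ k, 1 ≤ k → 0 ≤ P.coeff k) (z : ℂ) (k : ℕ) :
    0 ≤ P.coeff k * (‖z‖ ^ k - (z ^ k).re) := by
  rcases Nat.eq_zero_or_pos k with rfl | hk
  · simp
  · exact mul_nonneg (hP k hk) (sub_nonneg.mpr (norm_pow z k ▸ Complex.re_le_norm _))

lemma re_aeval_le_eval_norm (hP : ∀ k, 1 ≤ k → 0 ≤ P.coeff k) (z : ℂ) :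
    (aeval z P).re ≤ P.eval ‖z‖ :=
  sub_nonneg.mp <| eval_norm_sub_re_aeval z ▸
    Finset.sum_nonneg fun k _ => coeff_mul_sub_re_pow_nonneg hP z k

lemma pow_eq_norm_pow_of_eval_norm_le_re (hP : ∀ k, 1 ≤ k → 0 ≤ P.coeff k) {z : ℂ}
    (h : P.eval ‖z‖ ≤ (aeval z P).re) {k : ℕ} (hk : 0 < P.coeff k) :
    z ^ k = ((‖z‖ ^ k : ℝ) : ℂ) := by
  have hsum : ∑ i ∈ Finset.range (P.natDegree + 1), P.coeff i * (‖z‖ ^ i - (z ^ i).re) = 0 :=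
    eval_norm_sub_re_aeval z ▸
      le_antisymm (sub_nonpos.mpr h) (sub_nonneg.mpr (re_aeval_le_eval_norm hP z))
  have hterm := (Finset.sum_eq_zero_iff_of_nonneg fun i _ => coeff_mul_sub_re_pow_nonneg hP z i).mp
    hsum k (Finset.mem_range_succ_iff.mpr (le_natDegree_of_ne_zero hk.ne'))
  have hre : (z ^ k).re = ‖z ^ k‖ := by
    rw [norm_pow]
    linarith [(mul_eq_zero.mp hterm).resolve_left hk.ne']
  rw [← norm_pow]
  exact Complex.eq_coe_norm_of_nonneg (Complex.re_eq_norm.mp hre)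

theorem lt_norm_of_aeval_eq_zero (hP : ∀ k, 1 ≤ k → 0 ≤ P.coeff k) {n : ℕ}
    (hn : 0 < P.coeff n) (hn' : 0 < P.coeff (n + 1)) {r : ℝ} (hr : 0 < r) (hPr : P.eval r = 0)
    {z : ℂ} (hz : aeval z P = 0) (hzr : z ≠ r) : r < ‖z‖ := by
  have hmono := strictMonoOn_eval_of_coeff_nonneg hP (Nat.le_add_left 1 n) hn'
  have hle : 0 ≤ P.eval ‖z‖ := by simpa [hz] using re_aeval_le_eval_norm hP z
  rcases lt_trichotomy r ‖z‖ with h | h | h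
  · exact h
  · have heq : P.eval ‖z‖ ≤ (aeval z P).re := by simp [hz, ← h, hPr]
    have hzn := pow_eq_norm_pow_of_eval_norm_le_re hP heq hn
    have hzn' := pow_eq_norm_pow_of_eval_norm_le_re hP heq hn'
    have hz0 : (‖z‖ : ℂ) ^ n ≠ 0 := pow_ne_zero _ (by exact_mod_cast (h ▸ hr).ne')
    refine absurd ?_ hzr
    rw [h]
    apply mul_left_cancel₀ hz0
    push_cast at hzn hzn'
    linear_combination -z * hzn + hzn'
  · exact absurd hle (not_le.mpr (by simpa [hPr] using hmono (norm_nonneg z) hr.le h))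

end NonnegCoeff

lemma eval_one_pos_of_coeff_nonneg {P : ℤ[X]} (h0 : P.coeff 0 = -1)
    (hP : ∀ k, 1 ≤ k → 0 ≤ P.coeff k) {n : ℕ} (hn : 0 < P.coeff n) (hn' : 0 < P.coeff (n + 1)) :
    0 < P.eval 1 := by
  have hn0 : n ≠ 0 := by rintro rfl; omega
  have hdeg : n + 1 ≤ P.natDegree := le_natDegree_of_ne_zero hn'.ne'
  rw [eval_eq_sum_range]
  simp only [one_pow, mul_one]
  calc 0 < ∑ k ∈ {0, n, n + 1}, P.coeff k := by
        rw [Finset.sum_insert (by simp; omega), Finset.sum_pair (by omega)]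
        omega
    _ ≤ ∑ k ∈ Finset.range (P.natDegree + 1), P.coeff k := by
        refine Finset.sum_le_sum_of_subset_of_nonneg ?_ fun k _ hk => hP k ?_
        · intro k hk
          simp only [Finset.mem_insert, Finset.mem_singleton] at hk
          simp only [Finset.mem_range]
          omega
        · simp only [Finset.mem_insert, not_or] at hk
          omega

lemma aeval_inv_reverse_eq_zero_iff {R K : Type*} [CommSemiring R] [Field K] [Algebra R K]
    (P : R[X]) {x : K} (hx : x ≠ 0) : aeval x⁻¹ P.reverse = 0 ↔ aeval x P = 0 := by
  let := invertibleOfNonzero hx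
  simpa only [aeval_def, invOf_eq_inv] using eval₂_reverse_eq_zero_iff (algebraMap R K) x P

lemma isIntegral_inv_of_aeval_eq_zero {R K : Type*} [CommRing R] [Nontrivial R] [Field K]
    [Algebra R K] {P : R[X]} (hP : IsUnit (P.coeff 0)) {x : K} (hx : aeval x P = 0) :
    IsIntegral R x⁻¹ := by
  have hx0 : x ≠ 0 := by
    rintro rfl
    rw [← coeff_zero_eq_aeval_zero'] at hx
    exact (hP.map (algebraMap R K)).ne_zero hx
  refine ⟨C ↑hP.unit⁻¹ * P.reverse, monic_C_mul_of_mul_leadingCoeff_eq_one ?_, ?_⟩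
  · rw [reverse_leadingCoeff, trailingCoeff_eq_coeff_zero hP.ne_zero]
    exact hP.val_inv_mul
  · rw [← aeval_def, map_mul, (aeval_inv_reverse_eq_zero_iff P hx0).mpr hx, mul_zero]

end Polynomial

theorem isPerronNumber_inv_of_lt_norm {P : ℤ[X]} (hP : IsUnit (P.coeff 0)) {r : ℝ} (hr0 : 0 < r)
    (hr1 : r < 1) (hPr : aeval r P = 0) (hmin : ∀ z : ℂ, aeval z P = 0 → z ≠ r → r < ‖z‖) :
    IsPerronNumber r⁻¹ := by
  refine ⟨one_lt_inv₀ hr0 |>.mpr hr1, isIntegral_inv_of_aeval_eq_zero hP hPr, fun z hz hzr => ?_⟩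
  set Q := (P.map (algebraMap ℤ ℚ)).reverse
  have hQr : aeval r⁻¹ Q = 0 := by
    rwa [aeval_inv_reverse_eq_zero_iff _ hr0.ne', aeval_map_algebraMap]
  have hQz : aeval z Q = 0 := by
    obtain ⟨q, hq⟩ := minpoly.dvd ℚ _ hQr
    rw [hq, map_mul, hz, zero_mul]
  have hz0 : z ≠ 0 := by
    rintro rfl
    have hP0 : P ≠ 0 := fun h => hP.ne_zero (by simp [h])
    rw [← coeff_zero_eq_aeval_zero', coeff_zero_reverse, map_eq_zero_iff _ (RingHom.injective _),
      leadingCoeff_eq_zero, Polynomial.map_eq_zero_iff (algebraMap ℤ ℚ).injective_int] at hQz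
    exact hP0 hQz
  have hlt := hmin z⁻¹
    (by rwa [← aeval_map_algebraMap ℚ, ← aeval_inv_reverse_eq_zero_iff _ (inv_ne_zero hz0),
      inv_inv])
    (fun h => hzr (by rw [← inv_inv z, h, Complex.ofReal_inv]))
  rwa [norm_inv, lt_inv_comm₀ hr0 (norm_pos_iff.mpr hz0)] at hlt

theorem exists_root_isPerronNumber_inv {P : ℤ[X]} (h0 : P.coeff 0 = -1)
    (hP : ∀ k, 1 ≤ k → 0 ≤ P.coeff k) {n : ℕ} (hn : 0 < P.coeff n) (hn' : 0 < P.coeff (n + 1)) :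
    ∃ r : ℝ, 0 < r ∧ r < 1 ∧ aeval r P = 0 ∧
      (∀ z : ℂ, aeval z P = 0 → z ≠ r → r < ‖z‖) ∧ IsPerronNumber r⁻¹ := by
  set PR := P.map (algebraMap ℤ ℝ)
  have hcoeff (k : ℕ) : PR.coeff k = P.coeff k := by simp [PR]
  have heval (x : ℝ) : PR.eval x = aeval x P := eval_map_algebraMap P x
  obtain ⟨r, ⟨hr0, hr1⟩, hPr⟩ : ∃ r ∈ Set.Ioo (0 : ℝ) 1, PR.eval r = 0 := by
    refine intermediate_value_Ioo zero_le_one PR.continuous.continuousOn ⟨?_, ?_⟩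
    · simp [← coeff_zero_eq_eval_zero, hcoeff, h0]
    · rw [heval, aeval_def, eval₂_at_one, algebraMap_int_eq, eq_intCast]
      exact_mod_cast eval_one_pos_of_coeff_nonneg h0 hP hn hn'
  have hPR (k : ℕ) (hk : 1 ≤ k) : 0 ≤ PR.coeff k := by
    rw [hcoeff]
    exact_mod_cast hP k hk
  have hmin (z : ℂ) (hz : aeval z P = 0) (hzr : z ≠ r) : r < ‖z‖ :=
    lt_norm_of_aeval_eq_zero hPR (n := n) (by rw [hcoeff]; exact_mod_cast hn)
      (by rw [hcoeff]; exact_mod_cast hn') hr0 hPr (by rwa [aeval_map_algebraMap]) hzr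
  rw [heval] at hPr
  exact ⟨r, hr0, hr1, hPr, hmin,
    isPerronNumber_inv_of_lt_norm (h0 ▸ isUnit_one.neg) hr0 hr1 hPr hmin⟩

/-- `H₂₃₅₆` with `v223 = 2 e3 - 3 v333 - 2 v233 - v235 - v236`, `v225 = 2 e5 - v235` and
`v226 = 2 e6 - v236` substituted, which clears the halves from its coefficients. -/
noncomputable def h2356 (f v2222 v233 v235 v236 v333 e3 e5 e6 : ℕ) : ℤ[X] :=
  C ((v2222 + v236 + v333 : ℤ) - 1) * X ^ 17
  + C ((v2222 + 2 * v236 + 2 * v333 + f : ℤ) - 5) * X ^ 16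
  + C ((3 * v2222 + 3 * v236 + 2 * v333 + f + e3 + e5 + e6 : ℤ) - 8) * X ^ 15
  + C ((3 * v2222 + v233 + v235 + 5 * v236 + 5 * v333 + 3 * f + e5 + e6 : ℤ) - 16) * X ^ 14
  + C ((5 * v2222 + v235 + 5 * v236 + 4 * v333 + 3 * f + 2 * e3 + 3 * e5 + 3 * e6 : ℤ) - 20)
    * X ^ 13
  + C ((5 * v2222 + v233 + 3 * v235 + 6 * v236 + 6 * v333 + 5 * f + e3 + 2 * e5 + 3 * e6 : ℤ)
    - 28) * X ^ 12
  + C ((6 * v2222 + v233 + 3 * v235 + 6 * v236 + 6 * v333 + 5 * f + 2 * e3 + 4 * e5 + 4 * e6 : ℤ)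
    - 31) * X ^ 11
  + C ((6 * v2222 + v233 + 4 * v235 + 6 * v236 + 6 * v333 + 6 * f + 2 * e3 + 3 * e5 + 4 * e6 : ℤ)
    - 35) * X ^ 10
  + C ((6 * v2222 + v233 + 4 * v235 + 6 * v236 + 6 * v333 + 6 * f + 2 * e3 + 4 * e5 + 4 * e6 : ℤ)
    - 36) * X ^ 9
  + C ((6 * v2222 + v233 + 4 * v235 + 6 * v236 + 6 * v333 + 6 * f + 2 * e3 + 4 * e5 + 4 * e6 : ℤ)
    - 36) * X ^ 8
  + C ((5 * v2222 + v233 + 4 * v235 + 5 * v236 + 5 * v333 + 6 * f + 2 * e3 + 3 * e5 + 4 * e6 : ℤ)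
    - 35) * X ^ 7
  + C ((5 * v2222 + v233 + 3 * v235 + 4 * v236 + 4 * v333 + 5 * f + 2 * e3 + 4 * e5 + 4 * e6 : ℤ)
    - 31) * X ^ 6
  + C ((3 * v2222 + v233 + 3 * v235 + 3 * v236 + 4 * v333 + 5 * f + e3 + 2 * e5 + 3 * e6 : ℤ)
    - 28) * X ^ 5
  + C ((3 * v2222 + v235 + v236 + v333 + 3 * f + 2 * e3 + 3 * e5 + 3 * e6 : ℤ) - 20) * X ^ 4
  + C ((v2222 + v233 + v235 + v236 + 2 * v333 + 3 * f + e5 + e6 : ℤ) - 16) * X ^ 3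
  + C ((v2222 + f + e3 + e5 + e6 : ℤ) - 8) * X ^ 2
  + C ((f : ℤ) - 5) * X - 1

section h2356

variable {f v2222 v233 v235 v236 v333 e3 e5 e6 : ℕ}

lemma coeff_zero_h2356 : (h2356 f v2222 v233 v235 v236 v333 e3 e5 e6).coeff 0 = -1 := by
  simp only [h2356, coeff_add, coeff_sub, coeff_one, coeff_C_mul, coeff_X, coeff_X_pow]
  norm_num

lemma natDegree_h2356_le : (h2356 f v2222 v233 v235 v236 v333 e3 e5 e6).natDegree ≤ 17 := by
  unfold h2356
  compute_degree!

lemma coeff_h2356_nonneg (hf : 5 ≤ f) (hcusp : 1 ≤ v2222 + v236 + v333)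
    (he3 : 3 * v333 + 2 * v233 + v235 + v236 ≤ 2 * e3) (he5 : 1 ≤ e5) (he6 : v236 ≤ 2 * e6)
    (he36 : 1 ≤ e3 ∨ 1 ≤ e6) {k : ℕ} (hk : 1 ≤ k) :
    0 ≤ (h2356 f v2222 v233 v235 v236 v333 e3 e5 e6).coeff k := by
  rcases lt_or_ge 17 k with hk17 | hk17
  · rw [coeff_eq_zero_of_natDegree_lt (natDegree_h2356_le.trans_lt hk17)]
  interval_cases k <;>
    simp only [h2356, coeff_add, coeff_sub, coeff_one, coeff_C_mul, coeff_X, coeff_X_pow] <;>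
    norm_num <;> omega

lemma coeff_fifteen_h2356_pos (hf : 5 ≤ f) (hcusp : 1 ≤ v2222 + v236 + v333) (he5 : 1 ≤ e5)
    (he36 : 1 ≤ e3 ∨ 1 ≤ e6) : 0 < (h2356 f v2222 v233 v235 v236 v333 e3 e5 e6).coeff 15 := by
  simp only [h2356, coeff_add, coeff_sub, coeff_one, coeff_C_mul, coeff_X, coeff_X_pow]
  norm_num
  omega

lemma coeff_sixteen_h2356_pos (hf : 5 ≤ f) (hcusp : 1 ≤ v2222 + v236 + v333) :
    0 < (h2356 f v2222 v233 v235 v236 v333 e3 e5 e6).coeff 16 := by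
  simp only [h2356, coeff_add, coeff_sub, coeff_one, coeff_C_mul, coeff_X, coeff_X_pow]
  norm_num
  omega

end h2356

/-- the denominator polynomial `H₂₃₅₆` for non-compact hyperbolic Coxeter
polyhedra with dihedral angles `π/2`, `π/3`, `π/5`, `π/6`, at least one `π/5`-edge and at
least one `π/3`- or `π/6`-edge: its coefficients are integers, nonnegative in degrees
`1`–`17`, positive in degrees `15` and `16`, and it has a root `r0 ∈ (0,1)` smaller in
absolute value than all other complex roots, with `1/r0` a Perron number. -/
theorem H2356_growth_rate_isPerronNumber
    (f v2222 v223 v225 v226 v233 v235 v236 v333 e3 e5 e6 : ℕ)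
    (hf : 5 ≤ f)
    (hcusp : 1 ≤ v2222 + v236 + v333)
    (he3 : 2 * e3 = 3 * v333 + 2 * v233 + v223 + v235 + v236)
    (he5 : 2 * e5 = v225 + v235)
    (he5' : 1 ≤ e5)
    (he6 : 2 * e6 = v226 + v236)
    (he36 : 1 ≤ e3 ∨ 1 ≤ e6)
    (H : Polynomial ℚ)
    (hH : H = C ((v2222 : ℚ) + v236 + v333 - 1) * X ^ 17
        + C ((v2222 : ℚ) + 2 * v236 + 2 * v333 + f - 5) * X ^ 16
        + C (3 * (v2222 : ℚ) + (1/2) * v223 + (1/2) * v225 + (1/2) * v226 + v233 + v235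
              + 4 * v236 + (7/2) * v333 + f - 8) * X ^ 15
        + C (3 * (v2222 : ℚ) + (1/2) * v225 + (1/2) * v226 + v233 + (3/2) * v235
              + (11/2) * v236 + 5 * v333 + 3 * f - 16) * X ^ 14
        + C (5 * (v2222 : ℚ) + v223 + (3/2) * v225 + (3/2) * v226 + 2 * v233 + (7/2) * v235
              + (15/2) * v236 + 7 * v333 + 3 * f - 20) * X ^ 13
        + C (5 * (v2222 : ℚ) + (1/2) * v223 + v225 + (3/2) * v226 + 2 * v233 + (9/2) * v235
              + 8 * v236 + (15/2) * v333 + 5 * f - 28) * X ^ 12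
        + C (6 * (v2222 : ℚ) + v223 + 2 * v225 + 2 * v226 + 3 * v233 + 6 * v235
              + 9 * v236 + 9 * v333 + 5 * f - 31) * X ^ 11
        + C (6 * (v2222 : ℚ) + v223 + (3/2) * v225 + 2 * v226 + 3 * v233 + (13/2) * v235
              + 9 * v236 + 9 * v333 + 6 * f - 35) * X ^ 10
        + C (6 * (v2222 : ℚ) + v223 + 2 * v225 + 2 * v226 + 3 * v233 + 7 * v235
              + 9 * v236 + 9 * v333 + 6 * f - 36) * X ^ 9
        + C (6 * (v2222 : ℚ) + v223 + 2 * v225 + 2 * v226 + 3 * v233 + 7 * v235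
              + 9 * v236 + 9 * v333 + 6 * f - 36) * X ^ 8
        + C (5 * (v2222 : ℚ) + v223 + (3/2) * v225 + 2 * v226 + 3 * v233 + (13/2) * v235
              + 8 * v236 + 8 * v333 + 6 * f - 35) * X ^ 7
        + C (5 * (v2222 : ℚ) + v223 + 2 * v225 + 2 * v226 + 3 * v233 + 6 * v235
              + 7 * v236 + 7 * v333 + 5 * f - 31) * X ^ 6
        + C (3 * (v2222 : ℚ) + (1/2) * v223 + v225 + (3/2) * v226 + 2 * v233 + (9/2) * v235
              + 5 * v236 + (11/2) * v333 + 5 * f - 28) * X ^ 5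
        + C (3 * (v2222 : ℚ) + v223 + (3/2) * v225 + (3/2) * v226 + 2 * v233 + (7/2) * v235
              + (7/2) * v236 + 4 * v333 + 3 * f - 20) * X ^ 4
        + C ((v2222 : ℚ) + (1/2) * v225 + (1/2) * v226 + v233 + (3/2) * v235
              + (3/2) * v236 + 2 * v333 + 3 * f - 16) * X ^ 3
        + C ((v2222 : ℚ) + (1/2) * v223 + (1/2) * v225 + (1/2) * v226 + v233 + v235
              + v236 + (3/2) * v333 + f - 8) * X ^ 2
        + C ((f : ℚ) - 5) * X - 1) :
    (∀ k : ℕ, ∃ m : ℤ, H.coeff k = m) ∧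
    (∀ k : ℕ, 1 ≤ k → 0 ≤ H.coeff k) ∧
    0 < H.coeff 15 ∧ 0 < H.coeff 16 ∧
    ∃ r0 : ℝ, 0 < r0 ∧ r0 < 1 ∧ aeval r0 H = 0 ∧
      (∀ z : ℂ, aeval z H = 0 → z ≠ (r0 : ℂ) → (r0 : ℝ) < ‖z‖) ∧
      IsPerronNumber (1 / r0) := by
  have he3Q : (2 : ℚ) * e3 = 3 * v333 + 2 * v233 + v223 + v235 + v236 := by exact_mod_cast he3
  have he5Q : (2 : ℚ) * e5 = v225 + v235 := by exact_mod_cast he5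
  have he6Q : (2 : ℚ) * e6 = v226 + v236 := by exact_mod_cast he6
  set Q := h2356 f v2222 v233 v235 v236 v333 e3 e5 e6
  have hHQ : H = Q.map (algebraMap ℤ ℚ) := by
    rw [hH, show (v223 : ℚ) = 2 * e3 - 3 * v333 - 2 * v233 - v235 - v236 by linarith,
      show (v225 : ℚ) = 2 * e5 - v235 by linarith, show (v226 : ℚ) = 2 * e6 - v236 by linarith]
    simp only [Q, h2356, Polynomial.map_add, Polynomial.map_sub, Polynomial.map_mul,
      Polynomial.map_pow, Polynomial.map_C, Polynomial.map_X, Polynomial.map_one,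
      algebraMap_int_eq, Int.coe_castRingHom]
    push_cast
    ring_nf
  have hcoeff (k : ℕ) : H.coeff k = Q.coeff k := by simp [hHQ]
  have haeval {A : Type} [CommRing A] [Algebra ℚ A] (x : A) : aeval x H = aeval x Q := by
    rw [hHQ, aeval_map_algebraMap]
  have hQ : ∀ k, 1 ≤ k → 0 ≤ Q.coeff k := fun _ =>
    coeff_h2356_nonneg hf hcusp (by omega) he5' (by omega) he36
  have hQ15 : 0 < Q.coeff 15 := coeff_fifteen_h2356_pos hf hcusp he5' he36
  have hQ16 : 0 < Q.coeff 16 := coeff_sixteen_h2356_pos hf hcusp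
  obtain ⟨r, hr0, hr1, hroot, hmin, hperron⟩ :=
    exists_root_isPerronNumber_inv coeff_zero_h2356 hQ hQ15 hQ16
  refine ⟨fun k => ⟨Q.coeff k, hcoeff k⟩, fun k hk => ?_, ?_, ?_, r, hr0, hr1, by rwa [haeval],
    fun z hz => hmin z (by rwa [← haeval]), by rwa [one_div]⟩
  · rw [hcoeff]; exact_mod_cast hQ k hk
  · rw [hcoeff]; exact_mod_cast hQ15
  · rw [hcoeff]; exact_mod_cast hQ16
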